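/- Let M = sup { 2H(δ) + (1−δ)·H((β−2δ)/(1−δ)) : 0 ≤ β ≤ 1, 0 ≤ δ ≤ β/2 }. Then for every integer k ≥ 3, α_k ≥ 1 − M / log₂(k−1). -/

import Mathlib

/-!
If `d_E(x, y) < d` for `x, y ∈ Σ_kⁿ`, then `x` and `y` share a common subsequence of
length `n - d`. Its positions in `x` and in `y` can be chosen in at most `2ⁿ` ways each, and
together with `x` they fix all but `d` letters of `y`; so at most `4ⁿ kⁿ⁺ᵈ` of the `k²ⁿ`
pairs are that close. For `d = ⌊βn⌋` this fraction is `(4 k^(β-1))ⁿ → 0` as soon as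
`β < 1 - 2 / log₂ k`, whence `α_k ≥ 1 - 2 / log₂ k`. The theorem follows because `M ≥ 2`
(take `β = 1`, `δ = 1/2`).
-/

open Filter

/-- Costs for the Levenshtein edit distance (removed from Mathlib; restored with its old meaning). -/
structure Levenshtein.Cost (α β δ : Type*) where
  delete : α → δ
  insert : β → δ
  substitute : α → β → δ

/-- The default cost: unit costs for deletion, insertion and substitution, `0` for a match. -/
def Levenshtein.defaultCost {α : Type*} [DecidableEq α] : Levenshtein.Cost α α ℕ where
  delete _ := 1
  insert _ := 1
  substitute a b := if a = b then 0 else 1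

/-- Levenshtein distance with cost `C` (old Mathlib's `levenshtein`, via its defining recursion). -/
def levenshtein {α β δ : Type*} [AddZeroClass δ] [Min δ] (C : Levenshtein.Cost α β δ) :
    List α → List β → δ
  | [], ys => ys.foldr (fun y d => C.insert y + d) 0
  | x :: xs, [] => C.delete x + levenshtein C xs []
  | x :: xs, y :: ys =>
      min (C.delete x + levenshtein C xs (y :: ys))
        (min (C.insert y + levenshtein C (x :: xs) ys) (C.substitute x y + levenshtein C xs ys))

/-- Edit distance between two strings over `Fin k`, with unit costs for
substitution, deletion and insertion, and cost `0` for a match. -/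
def editDist {k : ℕ} (x y : List (Fin k)) : ℕ :=
  levenshtein Levenshtein.defaultCost x y

/-- `e_k(n)`: the average edit distance between two independent uniformly
random strings of length `n` over an alphabet of size `k`. -/
noncomputable def avgEditDist (k n : ℕ) : ℝ :=
  ((k : ℝ) ^ (2 * n))⁻¹ *
    ∑ x : Fin n → Fin k, ∑ y : Fin n → Fin k,
      (editDist (List.ofFn x) (List.ofFn y) : ℝ)

/-- `α_k(n) = e_k(n)/n`. -/
noncomputable def alphaN (k n : ℕ) : ℝ := avgEditDist k n / n

/-- The binary entropy function `H(t) = -t·log₂ t - (1-t)·log₂(1-t)`. -/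
noncomputable def binEntropy (t : ℝ) : ℝ :=
  -(t * Real.logb 2 t) - (1 - t) * Real.logb 2 (1 - t)

/-- `M = sup { 2H(δ) + (1−δ)·H((β−2δ)/(1−δ)) : 0 ≤ β ≤ 1, 0 ≤ δ ≤ β/2 }`. -/
noncomputable def Mconst : ℝ :=
  sSup {m : ℝ | ∃ β δ : ℝ, 0 ≤ β ∧ β ≤ 1 ∧ 0 ≤ δ ∧ δ ≤ β / 2 ∧
    m = 2 * binEntropy δ + (1 - δ) * binEntropy ((β - 2 * δ) / (1 - δ))}

open Finset Function Topology

section Levenshtein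

open List

variable {α : Type*} [DecidableEq α]

local notation "lev" => levenshtein Levenshtein.defaultCost

theorem levenshtein_defaultCost_nil_right (x : List α) : lev x [] = x.length := by
  induction x with
  | nil => simp [levenshtein]
  | cons a xs ih => rw [levenshtein, ih, length_cons, add_comm]; rfl

theorem levenshtein_defaultCost_cons_cons (a b : α) (xs ys : List α) :
    lev (a :: xs) (b :: ys) =
      min (1 + lev xs (b :: ys))
        (min (1 + lev (a :: xs) ys) ((if a = b then 0 else 1) + lev xs ys)) := by
  rw [levenshtein]; rfl

theorem exists_common_sublist_length_le_add_levenshtein : ∀ x y : List α,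
    ∃ z, z <+ x ∧ z <+ y ∧ x.length ≤ z.length + lev x y
  | [], _ => ⟨[], .slnil, nil_sublist _, by simp⟩
  | _ :: _, [] => ⟨[], nil_sublist _, .slnil, by simp [levenshtein_defaultCost_nil_right]⟩
  | a :: xs, b :: ys => by
    rw [levenshtein_defaultCost_cons_cons]
    rcases min_choice (1 + lev xs (b :: ys))
        (min (1 + lev (a :: xs) ys) ((if a = b then 0 else 1) + lev xs ys)) with h | h <;> rw [h]
    · obtain ⟨z, hx, hy, hz⟩ := exists_common_sublist_length_le_add_levenshtein xs (b :: ys)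
      exact ⟨z, hx.cons a, hy, by simp only [length_cons]; omega⟩
    rcases min_choice (1 + lev (a :: xs) ys) ((if a = b then 0 else 1) + lev xs ys) with h | h <;>
      rw [h]
    · obtain ⟨z, hx, hy, hz⟩ := exists_common_sublist_length_le_add_levenshtein (a :: xs) ys
      exact ⟨z, hx, hy.cons b, by omega⟩
    obtain ⟨z, hx, hy, hz⟩ := exists_common_sublist_length_le_add_levenshtein xs ys
    by_cases hab : a = b
    · subst hab
      exact ⟨a :: z, hx.cons_cons a, hy.cons_cons a, by simp only [length_cons]; omega⟩
    · exact ⟨z, hx.cons a, hy.cons b, by simp only [length_cons, if_neg hab]; omega⟩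
termination_by x y => x.length + y.length

theorem exists_strictMono_comp_eq_of_add_levenshtein_le {n ℓ : ℕ} (x y : Fin n → α)
    (h : ℓ + lev (ofFn x) (ofFn y) ≤ n) :
    ∃ a b : Fin ℓ → Fin n, StrictMono a ∧ StrictMono b ∧ x ∘ a = y ∘ b := by
  obtain ⟨z, hx, hy, hz⟩ := exists_common_sublist_length_le_add_levenshtein (ofFn x) (ofFn y)
  obtain ⟨f, hf⟩ := sublist_iff_exists_fin_orderEmbedding_get_eq.mp hx
  obtain ⟨g, hg⟩ := sublist_iff_exists_fin_orderEmbedding_get_eq.mp hy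
  have hℓ : ℓ ≤ z.length := by simp only [length_ofFn] at hz; omega
  refine ⟨Fin.cast length_ofFn ∘ f ∘ Fin.castLE hℓ,
    Fin.cast length_ofFn ∘ g ∘ Fin.castLE hℓ,
    (Fin.cast_strictMono _).comp (f.strictMono.comp (Fin.strictMono_castLE hℓ)),
    (Fin.cast_strictMono _).comp (g.strictMono.comp (Fin.strictMono_castLE hℓ)),
    funext fun i => ?_⟩
  have := (hf (Fin.castLE hℓ i)).symm.trans (hg (Fin.castLE hℓ i))
  simp only [get_ofFn] at this
  exact this

end Levenshtein

theorem card_filter_strictMono_le {α : Type*} [Fintype α] [LinearOrder α] (ℓ : ℕ) :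
    #{f : Fin ℓ → α | StrictMono f} ≤ 2 ^ Fintype.card α := by
  rw [← Fintype.card_finset, ← card_univ]
  refine card_le_card_of_injOn (fun f => univ.image f) (fun _ _ => mem_univ _) ?_
  intro f hf g hg hfg
  simp only [coe_filter, mem_univ, true_and, Set.mem_ofPred_eq] at hf hg
  refine (hf.range_inj hg).mp ?_
  simpa using congrArg (fun s : Finset α => (s : Set α)) hfg

theorem card_filter_comp_eq_comp_le {ι κ β : Type*} [Fintype ι] [DecidableEq ι] [Fintype κ]
    [Fintype β] [DecidableEq β] (f : κ → ι) {g : κ → ι} (hg : Injective g) :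
    #{p : (ι → β) × (ι → β) | p.1 ∘ f = p.2 ∘ g} ≤
      Fintype.card β ^ Fintype.card ι *
        Fintype.card β ^ (Fintype.card ι - Fintype.card κ) := by
  set B := univ.image g
  have hB : #Bᶜ = Fintype.card ι - Fintype.card κ := by
    rw [card_compl, card_image_of_injective _ hg, card_univ]
  -- on `range g` the second function is determined by the first one
  calc #{p : (ι → β) × (ι → β) | p.1 ∘ f = p.2 ∘ g}
      ≤ Fintype.card ((ι → β) × (↥Bᶜ → β)) := by
        rw [← card_univ]
        refine card_le_card_of_injOn (fun p => (p.1, fun j => p.2 j)) (fun _ _ => mem_univ _) ?_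
        rintro ⟨x, y⟩ hp ⟨x', y'⟩ hp' heq
        simp only [coe_filter, mem_univ, true_and, Set.mem_ofPred_eq, Prod.mk.injEq] at hp hp' heq
        obtain ⟨rfl, hy⟩ := heq
        refine Prod.ext rfl (funext fun j => ?_)
        by_cases hj : j ∈ B
        · obtain ⟨i, -, rfl⟩ := mem_image.mp hj
          exact (congrFun hp i).symm.trans (congrFun hp' i)
        · exact congrFun hy ⟨j, mem_compl.mpr hj⟩
    _ = _ := by simp only [Fintype.card_prod, Fintype.card_fun, Fintype.card_coe, hB]

theorem card_filter_editDist_lt_le {k n d : ℕ} (hd : d ≤ n) :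
    #{p : (Fin n → Fin k) × (Fin n → Fin k) | editDist (List.ofFn p.1) (List.ofFn p.2) < d} ≤
      4 ^ n * k ^ (n + d) := by
  set S := ({a : Fin (n - d) → Fin n | StrictMono a} : Finset _)
  have hS : #S ≤ 2 ^ n := by simpa using card_filter_strictMono_le (α := Fin n) (n - d)
  calc #{p : (Fin n → Fin k) × (Fin n → Fin k) | editDist (List.ofFn p.1) (List.ofFn p.2) < d}
      ≤ #((S ×ˢ S).biUnion fun ab => {p : (Fin n → Fin k) × (Fin n → Fin k) |
          p.1 ∘ ab.1 = p.2 ∘ ab.2}) := by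
        refine card_le_card fun p hp => ?_
        rw [mem_filter, editDist] at hp
        obtain ⟨a, b, ha, hb, hab⟩ := exists_strictMono_comp_eq_of_add_levenshtein_le p.1 p.2
          (ℓ := n - d) (by omega)
        simp only [mem_biUnion, mem_product, mem_filter, mem_univ, true_and, S]
        exact ⟨(a, b), ⟨ha, hb⟩, hab⟩
    _ ≤ ∑ ab ∈ S ×ˢ S,
          #{p : (Fin n → Fin k) × (Fin n → Fin k) | p.1 ∘ ab.1 = p.2 ∘ ab.2} :=
        card_biUnion_le
    _ ≤ #(S ×ˢ S) * (k ^ n * k ^ d) := by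
        refine sum_le_card_nsmul _ _ _ fun ab hab => ?_
        have hb : StrictMono ab.2 := by
          simp only [mem_product, mem_filter, S] at hab; exact hab.2.2
        simpa [Nat.sub_sub_self hd] using
          card_filter_comp_eq_comp_le (β := Fin k) ab.1 hb.injective
    _ ≤ 2 ^ n * 2 ^ n * (k ^ n * k ^ d) := by rw [card_product]; gcongr
    _ = 4 ^ n * k ^ (n + d) := by rw [← mul_pow, pow_add]; norm_num

theorem card_sub_card_filter_lt_mul_le_sum {ι : Type*} (s : Finset ι) (f : ι → ℕ) (d : ℕ) :
    (#s - #{i ∈ s | f i < d}) * d ≤ ∑ i ∈ s, f i :=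
  calc (#s - #{i ∈ s | f i < d}) * d = #{i ∈ s | ¬f i < d} • d := by
        rw [← card_filter_add_card_filter_not (p := fun i => f i < d), smul_eq_mul,
          Nat.add_sub_cancel_left]
    _ ≤ ∑ i ∈ s with ¬f i < d, f i :=
        card_nsmul_le_sum _ _ _ fun i hi => not_lt.mp (mem_filter.mp hi).2
    _ ≤ ∑ i ∈ s, f i := sum_le_sum_of_subset (filter_subset _ _)

theorem le_avgEditDist {k n d : ℕ} (hk : 0 < k) (hd : d ≤ n) :
    (d : ℝ) * (1 - 4 ^ n * (k : ℝ) ^ d / (k : ℝ) ^ n) ≤ avgEditDist k n := by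
  set bad := #{p : (Fin n → Fin k) × (Fin n → Fin k) |
    editDist (List.ofFn p.1) (List.ofFn p.2) < d}
  have hcard : #(univ : Finset ((Fin n → Fin k) × (Fin n → Fin k))) = k ^ (2 * n) := by
    simp [two_mul, pow_add]
  have hsum := card_sub_card_filter_lt_mul_le_sum univ
    (fun p : (Fin n → Fin k) × (Fin n → Fin k) => editDist (List.ofFn p.1) (List.ofFn p.2)) d
  rw [hcard, Fintype.sum_prod_type] at hsum
  have hbad : (bad : ℝ) ≤ 4 ^ n * (k : ℝ) ^ (n + d) := by
    exact_mod_cast card_filter_editDist_lt_le hd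
  have hK : (0 : ℝ) < (k : ℝ) ^ (2 * n) := by positivity
  calc (d : ℝ) * (1 - 4 ^ n * (k : ℝ) ^ d / (k : ℝ) ^ n)
      = (d : ℝ) * (1 - 4 ^ n * (k : ℝ) ^ (n + d) / (k : ℝ) ^ (2 * n)) := by
        field_simp; ring
    _ ≤ (d : ℝ) * (1 - bad / (k : ℝ) ^ (2 * n)) := by gcongr
    _ = ((k : ℝ) ^ (2 * n))⁻¹ * (((k ^ (2 * n) - bad : ℕ) : ℝ) * d) := by
        rw [Nat.cast_sub (hcard ▸ card_le_univ _)]; field_simp; push_cast; ring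
    _ ≤ avgEditDist k n := by
        rw [avgEditDist]; gcongr; exact_mod_cast hsum

theorem le_alphaN {k n : ℕ} (hk : 1 ≤ k) (hn : 0 < n) {β : ℝ} (hβ0 : 0 ≤ β)
    (hβ1 : β ≤ 1) :
    β - 1 / n - (4 * (k : ℝ) ^ (β - 1)) ^ n ≤ alphaN k n := by
  have hk' : (1 : ℝ) ≤ k := by exact_mod_cast hk
  have hn' : (0 : ℝ) < n := by exact_mod_cast hn
  set d := ⌊β * n⌋₊
  have hd_le : (d : ℝ) ≤ β * n := Nat.floor_le (by positivity)
  have hd_gt : β * n - 1 < d := by linarith [Nat.lt_floor_add_one (β * n)]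
  have hdn : d ≤ n := by
    have : (d : ℝ) ≤ n := hd_le.trans (by nlinarith)
    exact_mod_cast this
  have hq : 4 ^ n * (k : ℝ) ^ d / (k : ℝ) ^ n ≤ (4 * (k : ℝ) ^ (β - 1)) ^ n := by
    rw [mul_pow, ← Real.rpow_mul_natCast (by positivity), sub_mul, one_mul,
      Real.rpow_sub (by positivity), Real.rpow_natCast, ← mul_div_assoc]
    gcongr
    rw [← Real.rpow_natCast]
    exact Real.rpow_le_rpow_of_exponent_le hk' hd_le
  set q := 4 ^ n * (k : ℝ) ^ d / (k : ℝ) ^ n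
  have hq0 : 0 ≤ q := by positivity
  have hdn' : (d : ℝ) / n ≤ 1 := (div_le_one hn').mpr (by exact_mod_cast hdn)
  have hβd : β - 1 / n ≤ d / n := by
    rw [sub_div' hn'.ne', div_le_div_iff_of_pos_right hn']; linarith
  calc β - 1 / n - (4 * (k : ℝ) ^ (β - 1)) ^ n ≤ d / n - d / n * q := by nlinarith
    _ = d * (1 - q) / n := by ring
    _ ≤ alphaN k n := div_le_div_of_nonneg_right (le_avgEditDist (by omega) hdn) hn'.le

theorem alphaN_nonneg (k n : ℕ) : 0 ≤ alphaN k n := by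
  unfold alphaN avgEditDist
  positivity

theorem le_of_tendsto_alphaN {k : ℕ} (hk : 1 ≤ k) {α β : ℝ} (hβ0 : 0 ≤ β)
    (hβ : 4 * (k : ℝ) ^ (β - 1) < 1) (hconv : Tendsto (alphaN k) atTop (𝓝 α)) :
    β ≤ α := by
  have hβ1 : β ≤ 1 := by
    by_contra! h
    have : (1 : ℝ) ≤ (k : ℝ) ^ (β - 1) :=
      Real.one_le_rpow (by exact_mod_cast hk) (by linarith)
    linarith
  have hlim :
      Tendsto (fun n : ℕ => β - 1 / n - (4 * (k : ℝ) ^ (β - 1)) ^ n) atTop (𝓝 β) := by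
    simpa using (tendsto_const_nhds.sub tendsto_one_div_atTop_nhds_zero_nat).sub
      (tendsto_pow_atTop_nhds_zero_of_lt_one (by positivity) hβ)
  exact le_of_tendsto_of_tendsto hlim hconv
    (eventually_atTop.mpr ⟨1, fun n hn => le_alphaN hk hn hβ0 hβ1⟩)

theorem four_mul_rpow_sub_one_lt_one {k β : ℝ} (hk : 1 < k) (hβ : β < 1 - 2 / Real.logb 2 k) :
    4 * k ^ (β - 1) < 1 := by
  have hL : 0 < Real.logb 2 k := Real.logb_pos one_lt_two hk
  have hexp : Real.logb 2 k * (β - 1) < -2 := by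
    rw [lt_sub_comm, div_lt_iff₀ hL] at hβ
    linarith
  calc 4 * k ^ (β - 1) = 4 * (2 : ℝ) ^ (Real.logb 2 k * (β - 1)) := by
        rw [Real.rpow_mul zero_le_two, Real.rpow_logb two_pos (by norm_num) (by linarith)]
    _ < 4 * (2 : ℝ) ^ (-2 : ℝ) := by
        gcongr 4 * ?_; exact Real.rpow_lt_rpow_of_exponent_lt one_lt_two hexp
    _ = 1 := by norm_num [Real.rpow_neg]

theorem one_sub_two_div_logb_le_of_tendsto_alphaN {k : ℕ} (hk : 1 < k) {α : ℝ}
    (hconv : Tendsto (alphaN k) atTop (𝓝 α)) : 1 - 2 / Real.logb 2 k ≤ α := by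
  refine le_of_forall_lt_imp_le_of_dense fun β hβ => ?_
  rcases lt_or_ge β 0 with hβ0 | hβ0
  · exact hβ0.le.trans (ge_of_tendsto' hconv (alphaN_nonneg k))
  · exact le_of_tendsto_alphaN hk.le hβ0
      (four_mul_rpow_sub_one_lt_one (by exact_mod_cast hk) hβ) hconv

theorem binEntropy_eq_binEntropy_div_log_two (t : ℝ) :
    binEntropy t = Real.binEntropy t / Real.log 2 := by
  rw [binEntropy, Real.binEntropy, Real.logb, Real.logb, Real.log_inv, Real.log_inv]
  ring

theorem binEntropy_le_one (t : ℝ) : binEntropy t ≤ 1 := by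
  rw [binEntropy_eq_binEntropy_div_log_two, div_le_one (Real.log_pos one_lt_two)]
  exact Real.binEntropy_le_log_two

theorem two_le_Mconst : 2 ≤ Mconst := by
  refine le_csSup ⟨3, ?_⟩ ⟨1, 2⁻¹, by norm_num, le_rfl, by norm_num, by norm_num, ?_⟩
  · rintro m ⟨β, δ, -, hβ1, hδ0, hδ, rfl⟩
    have := mul_le_mul_of_nonneg_left (binEntropy_le_one ((β - 2 * δ) / (1 - δ)))
      (show 0 ≤ 1 - δ by linarith)
    linarith [binEntropy_le_one δ]
  · have h0 : (1 - 2 * 2⁻¹) / (1 - 2⁻¹) = (0 : ℝ) := by norm_num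
    rw [h0, binEntropy_eq_binEntropy_div_log_two, binEntropy_eq_binEntropy_div_log_two,
      Real.binEntropy_two_inv, Real.binEntropy_zero, div_self (Real.log_pos one_lt_two).ne']
    norm_num

/-- For every integer `k ≥ 3`, `α_k ≥ 1 − M / log₂(k−1)`. -/
theorem alpha_lower_bound_large_k (k : ℕ) (hk : 3 ≤ k) (α : ℝ)
    (hconv : Tendsto (fun n => alphaN k n) atTop (nhds α)) :
    1 - Mconst / Real.logb 2 ((k : ℝ) - 1) ≤ α := by
  have hk' : (3 : ℝ) ≤ k := by exact_mod_cast hk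
  have hL : 0 < Real.logb 2 ((k : ℝ) - 1) := Real.logb_pos one_lt_two (by linarith)
  have hLk : Real.logb 2 ((k : ℝ) - 1) ≤ Real.logb 2 k :=
    Real.logb_le_logb_of_le one_lt_two (by linarith) (by linarith)
  calc 1 - Mconst / Real.logb 2 ((k : ℝ) - 1)
      ≤ 1 - 2 / Real.logb 2 ((k : ℝ) - 1) := by gcongr; exact two_le_Mconst
    _ ≤ 1 - 2 / Real.logb 2 k := by gcongr
    _ ≤ α := one_sub_two_div_logb_le_of_tendsto_alphaN (by omega) hconv
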